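/- Let f : ℝ^N → ℝ be L-smooth, let μ ∈ ℝ^N have μ_j > 0 for every j, and let g_f denote the central-difference gradient estimator of f. Then for every x, y ∈ ℝ^N, ‖∇f(x) − g_f(y)‖² ≤ 2L²‖x − y‖² + (L²/2) ∑_{j=1}^N μ_j². -/

import Mathlib

open scoped RealInnerProductSpace
open intervalIntegral

section aux
variable {N : ℕ}

lemma inner_gradient_eq {f : EuclideanSpace ℝ (Fin N) → ℝ} (z v : EuclideanSpace ℝ (Fin N)) :
    ⟪gradient f z, v⟫ = fderiv ℝ f z v := by
  simp [gradient, InnerProductSpace.toDual_symm_apply]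

lemma descent {L : ℝ} {f : EuclideanSpace ℝ (Fin N) → ℝ}
    (hdiff : Differentiable ℝ f)
    (hL : ∀ x y : EuclideanSpace ℝ (Fin N), ‖gradient f x - gradient f y‖ ≤ L * ‖x - y‖)
    (a b : EuclideanSpace ℝ (Fin N)) :
    |f b - f a - ⟪gradient f a, b - a⟫| ≤ L / 2 * ‖b - a‖ ^ 2 := by
  rcases eq_or_ne b a with h | h
  · simp [h]
  have hv0 : 0 < ‖b - a‖ := by simpa [sub_ne_zero] using h
  have hLnn : 0 ≤ L := by nlinarith [hL b a, norm_nonneg (gradient f b - gradient f a)]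
  set v := b - a with hv
  have hgradcont : Continuous (gradient f) := by
    refine (LipschitzWith.of_dist_le_mul (K := Real.toNNReal |L|) ?_).continuous
    intro p q
    rw [dist_eq_norm, dist_eq_norm, Real.coe_toNNReal _ (abs_nonneg L)]
    exact (hL p q).trans (mul_le_mul_of_nonneg_right (le_abs_self L) (norm_nonneg _))
  have hline : ∀ t : ℝ, HasDerivAt (fun s : ℝ => a + s • v) v t := by
    intro t
    simpa using ((hasDerivAt_id t).smul_const v).const_add a
  have hφ : ∀ t : ℝ, HasDerivAt (fun s : ℝ => f (a + s • v)) ⟪gradient f (a + t • v), v⟫ t := by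
    intro t
    have h := (hdiff (a + t • v)).hasFDerivAt.comp_hasDerivAt t (hline t)
    rwa [inner_gradient_eq]
  have hcont : Continuous fun t : ℝ => ⟪gradient f (a + t • v), v⟫ :=
    (hgradcont.comp (continuous_const.add (continuous_id.smul continuous_const))).inner
      continuous_const
  have hI : IntervalIntegrable (fun t : ℝ => ⟪gradient f (a + t • v), v⟫)
      MeasureTheory.volume 0 1 := hcont.intervalIntegrable 0 1
  have key : f b - f a = ∫ t in (0:ℝ)..1, ⟪gradient f (a + t • v), v⟫ := by
    have h := intervalIntegral.integral_eq_sub_of_hasDerivAt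
      (f := fun s : ℝ => f (a + s • v)) (f' := fun t => ⟪gradient f (a + t • v), v⟫)
      (fun t _ => hφ t) hI
    rw [h]
    simp [hv]
  have key2 : f b - f a - ⟪gradient f a, v⟫
      = ∫ t in (0:ℝ)..1, ⟪gradient f (a + t • v) - gradient f a, v⟫ := by
    rw [key]
    rw [show (fun t : ℝ => ⟪gradient f (a + t • v) - gradient f a, v⟫)
        = fun t : ℝ => ⟪gradient f (a + t • v), v⟫ - ⟪gradient f a, v⟫ by
      funext t; rw [inner_sub_left]]
    rw [intervalIntegral.integral_sub hI intervalIntegrable_const]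
    simp
  rw [show ⟪gradient f a, b - a⟫ = ⟪gradient f a, v⟫ from rfl, key2, ← Real.norm_eq_abs]
  have hbnd : ∀ t ∈ Set.Ioc (0:ℝ) 1,
      ‖⟪gradient f (a + t • v) - gradient f a, v⟫‖ ≤ L * ‖v‖ ^ 2 * t := by
    intro t ht
    have h1 : |⟪gradient f (a + t • v) - gradient f a, v⟫| ≤
        ‖gradient f (a + t • v) - gradient f a‖ * ‖v‖ := abs_real_inner_le_norm _ _
    have h2 : ‖gradient f (a + t • v) - gradient f a‖ ≤ L * (t * ‖v‖) := by
      have := hL (a + t • v) a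
      simpa [norm_smul, abs_of_pos ht.1] using this
    calc ‖⟪gradient f (a + t • v) - gradient f a, v⟫‖
        ≤ ‖gradient f (a + t • v) - gradient f a‖ * ‖v‖ := h1
      _ ≤ (L * (t * ‖v‖)) * ‖v‖ := mul_le_mul_of_nonneg_right h2 (norm_nonneg _)
      _ = L * ‖v‖ ^ 2 * t := by ring
  calc ‖∫ t in (0:ℝ)..1, ⟪gradient f (a + t • v) - gradient f a, v⟫‖
      ≤ |∫ t in (0:ℝ)..1, L * ‖v‖ ^ 2 * t| := by
        refine intervalIntegral.norm_integral_le_abs_of_norm_le ?_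
          ((by continuity : Continuous fun t : ℝ => L * ‖v‖ ^ 2 * t).intervalIntegrable 0 1)
        filter_upwards [MeasureTheory.ae_restrict_mem measurableSet_uIoc] with t ht
        rw [Set.uIoc_of_le zero_le_one] at ht
        exact hbnd t ht
    _ = L / 2 * ‖v‖ ^ 2 := by
        rw [intervalIntegral.integral_const_mul, integral_id,
          abs_of_nonneg (mul_nonneg (mul_nonneg hLnn (sq_nonneg _)) (by norm_num))]
        ring

lemma coord_bound {L : ℝ} {f : EuclideanSpace ℝ (Fin N) → ℝ}
    (hdiff : Differentiable ℝ f)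
    (hL : ∀ x y : EuclideanSpace ℝ (Fin N), ‖gradient f x - gradient f y‖ ≤ L * ‖x - y‖)
    (y : EuclideanSpace ℝ (Fin N)) {m : ℝ} (hm : 0 < m) (e : EuclideanSpace ℝ (Fin N))
    (he : ‖e‖ = 1) :
    |(f (y + m • e) - f (y - m • e)) / (2 * m) - ⟪gradient f y, e⟫| ≤ L * m / 2 := by
  have h1 := descent hdiff hL y (y + m • e)
  have h2 := descent hdiff hL y (y - m • e)
  rw [add_sub_cancel_left, real_inner_smul_right, norm_smul, he, Real.norm_eq_abs, abs_of_pos hm] at h1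
  rw [show y - m • e - y = (-m) • e by rw [neg_smul]; abel, real_inner_smul_right,
    norm_smul, he, Real.norm_eq_abs, abs_neg, abs_of_pos hm] at h2
  set I := ⟪gradient f y, e⟫ with hI
  have key : (f (y + m • e) - f (y - m • e)) / (2 * m) - I
      = ((f (y + m • e) - f y - m * I) - (f (y - m • e) - f y - (-m) * I)) / (2 * m) := by
    field_simp
    ring
  rw [key, abs_div, abs_of_pos (by positivity : (0:ℝ) < 2 * m),
    div_le_iff₀ (by positivity : (0:ℝ) < 2 * m)]
  have e1 := abs_le.1 h1
  have e2 := abs_le.1 h2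
  rw [abs_le]
  constructor <;> nlinarith [e1.1, e1.2, e2.1, e2.2, mul_pos hm hm]

end aux


/-- The central-difference gradient estimator
`g_f(x) = ∑_j ((f(x + μ_j e_j) - f(x - μ_j e_j))/(2 μ_j)) e_j`. -/
noncomputable def cdGrad (N : ℕ) (f : EuclideanSpace ℝ (Fin N) → ℝ) (μ : Fin N → ℝ)
    (x : EuclideanSpace ℝ (Fin N)) : EuclideanSpace ℝ (Fin N) :=
  ∑ j : Fin N,
    ((f (x + μ j • EuclideanSpace.single j (1 : ℝ)) -
        f (x - μ j • EuclideanSpace.single j (1 : ℝ))) / (2 * μ j)) •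
      EuclideanSpace.single j (1 : ℝ)

/-- For an `L`-smooth `f` and positive stepsizes `μ j`, the gradient and the
central-difference gradient estimator satisfy
`‖∇f(x) - g_f(y)‖² ≤ 2 L² ‖x - y‖² + (L²/2) ∑_j μ_j²` for all `x, y`. -/
theorem stmt_11 (N : ℕ) (L : ℝ) (f : EuclideanSpace ℝ (Fin N) → ℝ)
    (hdiff : Differentiable ℝ f)
    (hL : ∀ x y : EuclideanSpace ℝ (Fin N), ‖gradient f x - gradient f y‖ ≤ L * ‖x - y‖)
    (μ : Fin N → ℝ) (hμ : ∀ j, 0 < μ j) (x y : EuclideanSpace ℝ (Fin N)) :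
    ‖gradient f x - cdGrad N f μ y‖ ^ 2
      ≤ 2 * L ^ 2 * ‖x - y‖ ^ 2 + (L ^ 2 / 2) * ∑ j : Fin N, (μ j) ^ 2 := by
  have hnorm : ∀ d : EuclideanSpace ℝ (Fin N), ‖d‖ ^ 2 = ∑ j, (d j) ^ 2 := by
    intro d
    rw [EuclideanSpace.norm_eq, Real.sq_sqrt (by positivity)]
    simp [Real.norm_eq_abs, sq_abs]
  have hcoord : ∀ j : Fin N, (cdGrad N f μ y) j
      = (f (y + μ j • EuclideanSpace.single j (1 : ℝ)) -
          f (y - μ j • EuclideanSpace.single j (1 : ℝ))) / (2 * μ j) := by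
    intro j
    simp only [cdGrad]
    rw [WithLp.ofLp_sum, Finset.sum_apply]
    simp [EuclideanSpace.single_apply]
  have hGcoord : ∀ j : Fin N, gradient f y j = ⟪gradient f y, EuclideanSpace.single j (1:ℝ)⟫ := by
    intro j
    rw [EuclideanSpace.inner_single_right]
    simp
  have hj : ∀ j : Fin N, (gradient f y j - (cdGrad N f μ y) j) ^ 2 ≤ (L * μ j / 2) ^ 2 := by
    intro j
    have hb := coord_bound hdiff hL y (hμ j) (EuclideanSpace.single j (1:ℝ))
      (by simp)
    rw [hcoord j, hGcoord j, ← sq_abs, ← neg_sub, abs_neg]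
    exact pow_le_pow_left₀ (abs_nonneg _) hb 2
  have hmid : ‖gradient f y - cdGrad N f μ y‖ ^ 2 ≤ (L ^ 2 / 4) * ∑ j : Fin N, (μ j) ^ 2 := by
    rw [hnorm]
    calc ∑ j : Fin N, ((gradient f y - cdGrad N f μ y) j) ^ 2
        = ∑ j : Fin N, (gradient f y j - (cdGrad N f μ y) j) ^ 2 := by
          refine Finset.sum_congr rfl fun j _ => ?_
          rw [PiLp.sub_apply]
      _ ≤ ∑ j : Fin N, (L * μ j / 2) ^ 2 := Finset.sum_le_sum fun j _ => hj j
      _ = (L ^ 2 / 4) * ∑ j : Fin N, (μ j) ^ 2 := by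
          rw [Finset.mul_sum]
          refine Finset.sum_congr rfl fun j _ => ?_
          ring
  have hfirst : ‖gradient f x - gradient f y‖ ^ 2 ≤ L ^ 2 * ‖x - y‖ ^ 2 := by
    calc ‖gradient f x - gradient f y‖ ^ 2 ≤ (L * ‖x - y‖) ^ 2 :=
        pow_le_pow_left₀ (norm_nonneg _) (hL x y) 2
      _ = L ^ 2 * ‖x - y‖ ^ 2 := by ring
  have htri : ‖gradient f x - cdGrad N f μ y‖
      ≤ ‖gradient f x - gradient f y‖ + ‖gradient f y - cdGrad N f μ y‖ :=
    norm_sub_le_norm_sub_add_norm_sub _ _ _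
  have hsq : ‖gradient f x - cdGrad N f μ y‖ ^ 2
      ≤ 2 * ‖gradient f x - gradient f y‖ ^ 2 + 2 * ‖gradient f y - cdGrad N f μ y‖ ^ 2 := by
    nlinarith [norm_nonneg (gradient f x - cdGrad N f μ y),
      norm_nonneg (gradient f x - gradient f y), norm_nonneg (gradient f y - cdGrad N f μ y),
      sq_nonneg (‖gradient f x - gradient f y‖ - ‖gradient f y - cdGrad N f μ y‖)]
  linarith
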